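/- Let D be a database instance in which all tuples are endogenous and Q a monotone Boolean query with ¬Q ∅ (the empty instance satisfies the denial constraint). For every finite set T of tuples (the ground atoms of a projection-free conjunctive query answer): T is contained in every C-repair of D with respect to ¬Q if and only if T ⊆ D and no element of T is a most responsible actual cause for Q. (Proposition 'cqa' (b)) -/

import Mathlib

open scoped Classical

variable {α : Type*} [DecidableEq α]

/-- A monotone Boolean query on database instances (finite sets of tuples). -/
def MonotoneQuery (Q : Finset α → Prop) : Prop :=
  ∀ ⦃X Y : Finset α⦄, X ⊆ Y → Q X → Q Y

/-- `Γ` is a contingency set for tuple `t` wrt query `Q`, instance `D`,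
endogenous part `Dn`. -/
def IsContingency (D Dn : Finset α) (Q : Finset α → Prop) (t : α) (Γ : Finset α) : Prop :=
  Γ ⊆ Dn ∧ t ∉ Γ ∧ Q (D \ Γ) ∧ ¬ Q (D \ (Γ ∪ {t}))

/-- `t` is an actual cause for `Q`. -/
def IsActualCause (D Dn : Finset α) (Q : Finset α → Prop) (t : α) : Prop :=
  t ∈ Dn ∧ ∃ Γ : Finset α, IsContingency D Dn Q t Γ

/-- Minimum cardinality of a contingency set for `t`. -/
noncomputable def minContingency (D Dn : Finset α) (Q : Finset α → Prop) (t : α) : ℕ :=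
  sInf {m : ℕ | ∃ Γ : Finset α, IsContingency D Dn Q t Γ ∧ Γ.card = m}

/-- Responsibility of `t`: `1/(1+m)` with `m` the minimum size of a contingency set,
and `0` if `t` is not an actual cause. -/
noncomputable def resp (D Dn : Finset α) (Q : Finset α → Prop) (t : α) : ℚ :=
  if IsActualCause D Dn Q t then 1 / (1 + (minContingency D Dn Q t : ℚ)) else 0

/-- `t` is a most responsible actual cause. -/
def IsMostResponsibleCause (D Dn : Finset α) (Q : Finset α → Prop) (t : α) : Prop :=
  IsActualCause D Dn Q t ∧ ∀ t' : α, ¬ resp D Dn Q t < resp D Dn Q t'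

/-- `D'` is an S-repair of `D` wrt the denial constraint `¬ Q`. -/
def IsSRepair (D : Finset α) (Q : Finset α → Prop) (D' : Finset α) : Prop :=
  D' ⊆ D ∧ ¬ Q D' ∧ ∀ D'' : Finset α, D'' ⊆ D → ¬ Q D'' → D' ⊆ D'' → D'' = D'

/-- `D'` is a C-repair of `D` wrt the denial constraint `¬ Q`. -/
def IsCRepair (D : Finset α) (Q : Finset α → Prop) (D' : Finset α) : Prop :=
  D' ⊆ D ∧ ¬ Q D' ∧ ∀ D'' : Finset α, D'' ⊆ D → ¬ Q D'' → D''.card ≤ D'.card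

/-- `Γ ∈ CT(t)`: `Γ` is an S-minimal contingency set for `t`. -/
def InCT (D Dn : Finset α) (Q : Finset α → Prop) (t : α) (Γ : Finset α) : Prop :=
  IsContingency D Dn Q t Γ ∧ ∀ Γ'' : Finset α, Γ'' ⊂ Γ → Q (D \ (Γ'' ∪ {t}))

/-- `𝔖(D)`: S-minimal subsets of `D` satisfying `Q`. -/
def Sfam (D : Finset α) (Q : Finset α → Prop) : Set (Finset α) :=
  {s | s ⊆ D ∧ Q s ∧ ∀ s' : Finset α, s' ⊂ s → ¬ Q s'}

/-- Subsets of `Dn` contained in some `s' ∈ 𝔖(D)` whose remainder is exogenous. -/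
def SnPre (D Dn Dx : Finset α) (Q : Finset α → Prop) : Set (Finset α) :=
  {s | s ⊆ Dn ∧ ∃ s' ∈ Sfam D Q, s ⊆ s' ∧ s' \ s ⊆ Dx}

/-- `𝔖ⁿ(D)`: the inclusion-minimal elements of `SnPre`. -/
def SnFam (D Dn Dx : Finset α) (Q : Finset α → Prop) : Set (Finset α) :=
  {s ∈ SnPre D Dn Dx Q | ∀ s' ∈ SnPre D Dn Dx Q, s' ⊆ s → s' = s}

/-- `H` is a hitting set for `𝔖ⁿ(D)`. -/
def IsHittingSet (D Dn Dx : Finset α) (Q : Finset α → Prop) (H : Finset α) : Prop :=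
  H ⊆ Dn ∧ ∀ s ∈ SnFam D Dn Dx Q, (H ∩ s).Nonempty

/-- `H` is an S-minimal hitting set for `𝔖ⁿ(D)`. -/
def IsSMinimalHittingSet (D Dn Dx : Finset α) (Q : Finset α → Prop) (H : Finset α) : Prop :=
  IsHittingSet D Dn Dx Q H ∧ ∀ H' : Finset α, H' ⊂ H → ¬ IsHittingSet D Dn Dx Q H'

/-- `H` is a minimum-cardinality hitting set for `𝔖ⁿ(D)`. -/
def IsMinimumHittingSet (D Dn Dx : Finset α) (Q : Finset α → Prop) (H : Finset α) : Prop :=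
  IsHittingSet D Dn Dx Q H ∧ ∀ H' : Finset α, IsHittingSet D Dn Dx Q H' → H.card ≤ H'.card

/-- `Δ` is a diagnosis for the diagnosis problem associated with `Q`. -/
def IsDiagnosis (D Dn : Finset α) (Q : Finset α → Prop) (Δ : Finset α) : Prop :=
  Δ ⊆ Dn ∧ ¬ Q (D \ Δ)

/-- `Δ ∈ 𝒟(ℳ,t)`: `Δ` is an inclusion-minimal diagnosis containing `t`. -/
def IsMinimalDiagnosisWith (D Dn : Finset α) (Q : Finset α → Prop) (t : α)
    (Δ : Finset α) : Prop :=
  IsDiagnosis D Dn Q Δ ∧ t ∈ Δ ∧ ∀ Δ' : Finset α, Δ' ⊂ Δ → ¬ IsDiagnosis D Dn Q Δ'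

/-- `Δ ∈ MCD(ℳ,t)`: `Δ` is an element of `𝒟(ℳ,t)` of minimum cardinality. -/
def IsMCDWith (D Dn : Finset α) (Q : Finset α → Prop) (t : α) (Δ : Finset α) : Prop :=
  IsMinimalDiagnosisWith D Dn Q t Δ ∧
    ∀ Δ' : Finset α, IsMinimalDiagnosisWith D Dn Q t Δ' → Δ.card ≤ Δ'.card

/-!
Let a C-repair delete `c` tuples of `D`. Deleting a contingency set `Γ` of `t` together with
`t` falsifies `Q`, so `#Γ ≥ c - 1`; conversely every tuple deleted by a C-repair has the other
`c - 1` deleted tuples as a contingency set. So the most responsible causes are exactly the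
tuples missing from some C-repair: for a most responsible `t` with minimum contingency set `Γ`
(and `c ≥ 1`, as `Q D` holds by monotonicity), `D \ (Γ ∪ {t})` is itself a C-repair.
-/

open Finset

variable {D Dn D' D₀ Γ : Finset α} {Q : Finset α → Prop} {t t' : α}

omit [DecidableEq α] in
theorem exists_isCRepair (hQ : ¬ Q ∅) : ∃ D', IsCRepair D Q D' := by
  obtain ⟨D', hD', hmax⟩ := exists_max_image {X ∈ D.powerset | ¬ Q X} card ⟨∅, by simp [hQ]⟩
  simp only [mem_filter, mem_powerset] at hD' hmax
  exact ⟨D', hD'.1, hD'.2, fun D'' hsub hQ'' => hmax D'' ⟨hsub, hQ''⟩⟩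

omit [DecidableEq α] in
theorem IsCRepair.of_card_le (hD₀ : IsCRepair D Q D₀) (hsub : D' ⊆ D) (hQ : ¬ Q D')
    (hcard : #D₀ ≤ #D') : IsCRepair D Q D' :=
  ⟨hsub, hQ, fun D'' hsub'' hQ'' => (hD₀.2.2 D'' hsub'' hQ'').trans hcard⟩

theorem minContingency_le (hΓ : IsContingency D Dn Q t Γ) : minContingency D Dn Q t ≤ #Γ :=
  Nat.sInf_le ⟨Γ, hΓ, rfl⟩

theorem IsActualCause.exists_card_eq_minContingency (ht : IsActualCause D Dn Q t) :
    ∃ Γ, IsContingency D Dn Q t Γ ∧ #Γ = minContingency D Dn Q t := by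
  obtain ⟨-, Γ, hΓ⟩ := ht
  exact Nat.sInf_mem (s := {m | ∃ Γ, IsContingency D Dn Q t Γ ∧ #Γ = m}) ⟨#Γ, Γ, hΓ, rfl⟩

theorem resp_le_resp_iff (ht : IsActualCause D Dn Q t) (ht' : IsActualCause D Dn Q t') :
    resp D Dn Q t' ≤ resp D Dn Q t ↔ minContingency D Dn Q t ≤ minContingency D Dn Q t' := by
  rw [resp, resp, if_pos ht, if_pos ht', one_div_le_one_div (by positivity) (by positivity)]
  simp

theorem resp_le_resp_of_not_isActualCause (ht : IsActualCause D Dn Q t)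
    (ht' : ¬ IsActualCause D Dn Q t') : resp D Dn Q t' ≤ resp D Dn Q t := by
  rw [resp, resp, if_pos ht, if_neg ht']
  positivity

theorem IsContingency.card_sdiff_add (hΓ : IsContingency D D Q t Γ) (ht : t ∈ D) :
    #(D \ (Γ ∪ {t})) + #Γ + 1 = #D := by
  have hsub : Γ ∪ {t} ⊆ D := union_subset hΓ.1 (singleton_subset_iff.2 ht)
  rw [← card_sdiff_add_card_eq_card hsub, union_singleton, card_insert_of_notMem hΓ.2.1,
    add_assoc]

theorem IsCRepair.isContingency_erase (hD' : IsCRepair D Q D') (ht : t ∈ D \ D') :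
    IsContingency D D Q t ((D \ D').erase t) := by
  obtain ⟨hsub, hQ', hmax⟩ := hD'
  have hQins : Q (insert t D') := by
    by_contra hQins
    have := hmax _ (insert_subset (mem_sdiff.1 ht).1 hsub) hQins
    rw [card_insert_of_notMem (mem_sdiff.1 ht).2] at this
    omega
  refine ⟨(erase_subset _ _).trans sdiff_subset, notMem_erase _ _, ?_, ?_⟩
  · rwa [sdiff_erase (mem_sdiff.1 ht).1, _root_.sdiff_sdiff_eq_self hsub]
  · rwa [union_singleton, insert_erase ht, _root_.sdiff_sdiff_eq_self hsub]

theorem IsCRepair.minContingency_lt (hD' : IsCRepair D Q D') (ht : t ∈ D \ D') :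
    minContingency D D Q t < #(D \ D') :=
  (minContingency_le (hD'.isContingency_erase ht)).trans_lt (card_erase_lt_of_mem ht)

theorem IsCRepair.card_sdiff_le (hD' : IsCRepair D Q D') (hΓ : IsContingency D D Q t Γ)
    (ht : t ∈ D) : #(D \ D') ≤ #Γ + 1 := by
  have hle := hD'.2.2 _ sdiff_subset hΓ.2.2.2
  have := hΓ.card_sdiff_add ht
  have := card_sdiff_add_card_eq_card hD'.1
  omega

theorem IsCRepair.isMostResponsibleCause (hD' : IsCRepair D Q D') (ht : t ∈ D \ D') :
    IsMostResponsibleCause D D Q t := by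
  have hcause : IsActualCause D D Q t := ⟨(mem_sdiff.1 ht).1, _, hD'.isContingency_erase ht⟩
  refine ⟨hcause, fun t' => not_lt.2 ?_⟩
  by_cases hcause' : IsActualCause D D Q t'
  · obtain ⟨Γ, hΓ, hcard⟩ := hcause'.exists_card_eq_minContingency
    have := hD'.card_sdiff_le hΓ hcause'.1
    have := hD'.minContingency_lt ht
    exact (resp_le_resp_iff hcause hcause').2 (by omega)
  · exact resp_le_resp_of_not_isActualCause hcause hcause'

theorem IsMostResponsibleCause.exists_isCRepair_mem_sdiff (hmono : MonotoneQuery Q)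
    (hQ : ¬ Q ∅) (ht : IsMostResponsibleCause D D Q t) :
    ∃ D', IsCRepair D Q D' ∧ t ∈ D \ D' := by
  obtain ⟨hcause, hmost⟩ := ht
  obtain ⟨Γ, hΓ, hcard⟩ := hcause.exists_card_eq_minContingency
  obtain ⟨D₀, hD₀⟩ := exists_isCRepair (D := D) hQ
  have hD₀ssub : D₀ ⊂ D :=
    ssubset_of_subset_of_ne hD₀.1 fun h => hD₀.2.1 (h ▸ hmono sdiff_subset hΓ.2.2.1)
  obtain ⟨t', ht'D, ht'D₀⟩ := exists_of_ssubset hD₀ssub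
  have ht' : t' ∈ D \ D₀ := mem_sdiff.2 ⟨ht'D, ht'D₀⟩
  have hcause' : IsActualCause D D Q t' := ⟨ht'D, _, hD₀.isContingency_erase ht'⟩
  have hle := (resp_le_resp_iff hcause hcause').1 (not_lt.1 (hmost t'))
  have hlt := hD₀.minContingency_lt ht'
  have := hΓ.card_sdiff_add hcause.1
  have := card_sdiff_add_card_eq_card hD₀.1
  refine ⟨_, hD₀.of_card_le sdiff_subset hΓ.2.2.2 (by omega), ?_⟩
  simp [hcause.1]

theorem isMostResponsibleCause_iff_exists_isCRepair (hmono : MonotoneQuery Q) (hQ : ¬ Q ∅) :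
    IsMostResponsibleCause D D Q t ↔ ∃ D', IsCRepair D Q D' ∧ t ∈ D \ D' :=
  ⟨IsMostResponsibleCause.exists_isCRepair_mem_sdiff hmono hQ,
    fun ⟨_, hD', ht⟩ => hD'.isMostResponsibleCause ht⟩

/-- Proposition `cqa`(b): `T` is contained in every C-repair iff `T ⊆ D` and
no element of `T` is a most responsible actual cause for `Q`. -/
theorem cconsistent_iff_no_mrc (D : Finset α) (Q : Finset α → Prop)
    (hmono : MonotoneQuery Q) (hQempty : ¬ Q ∅) (T : Finset α) :
    (∀ D' : Finset α, IsCRepair D Q D' → T ⊆ D') ↔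
      (T ⊆ D ∧ ∀ t ∈ T, ¬ IsMostResponsibleCause D D Q t) := by
  simp only [isMostResponsibleCause_iff_exists_isCRepair hmono hQempty,
    mem_sdiff, not_exists, not_and, not_not]
  constructor
  · intro hT
    obtain ⟨D₀, hD₀⟩ := exists_isCRepair hQempty
    exact ⟨(hT D₀ hD₀).trans hD₀.1, fun t ht D' hD' _ => hT D' hD' ht⟩
  · exact fun ⟨hTD, hT⟩ D' hD' t ht => hT t ht D' hD' (hTD ht)
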